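/- arXiv:1608.07064 — 2 statements merged into one kernel-verified Lean document; each statement's English description precedes it below -/
import Mathlib

section
/- Let N = 4, σ > 0, and U^σ(x) = [N(N−2)]^{(N−2)/4}/(1+|x|²)^{(N−2+σ)/2}. Then ‖∇U^σ‖₂² ≤ ‖∇U‖₂² + Cσ for a constant C independent of σ ∈ (0,1), where U = U^0 is the Aubin–Talenti instanton. -/
/-!
`U^σ = c (1 + |x|²)^(-(N-2+σ)/2)`, so `|∇U^σ(x)| = c (N-2+σ) |x| (1 + |x|²)^(-(N+σ)/2)`.
Since `(1 + |x|²)^(-σ/2) ≤ 1`, this gives the pointwise bound `|∇U^σ| ≤ (N-2+σ)/(N-2) · |∇U|`,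
and integrating, `‖∇U^σ‖₂² ≤ ((N-2+σ)/(N-2))² ‖∇U‖₂²`. For `N = 4` and `σ < 1` the factor is
`(1 + σ/2)² ≤ 1 + 2σ`.
-/

open MeasureTheory InnerProductSpace Module

noncomputable def instantonPert (N : ℕ) (σ : ℝ) (x : EuclideanSpace ℝ (Fin N)) : ℝ :=
  ((N:ℝ) * ((N:ℝ) - 2)) ^ (((N:ℝ) - 2) / 4) /
    (1 + ‖x‖ ^ (2:ℕ)) ^ (((N:ℝ) - 2 + σ) / 2)

section OneAddNormSqRpow

variable {E : Type*} [NormedAddCommGroup E] [InnerProductSpace ℝ E]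

lemma hasGradientAt_mul_one_add_norm_sq_rpow [CompleteSpace E] (a p : ℝ) (x : E) :
    HasGradientAt (fun y : E => a * (1 + ‖y‖ ^ 2) ^ p)
      ((2 * a * p * (1 + ‖x‖ ^ 2) ^ (p - 1)) • x) x := by
  rw [hasGradientAt_iff_hasFDerivAt]
  refine ((((hasFDerivAt_id x).norm_sq.const_add 1).rpow_const (p := p)
    (Or.inl (by positivity))).const_mul a).congr_fderiv ?_
  ext v
  simp only [ContinuousLinearMap.comp_id, smul_apply, coe_innerSL_apply, nsmul_eq_mul,
    smul_eq_mul, map_smul, toDual_apply_apply, id_eq, Nat.cast_ofNat]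
  ring

lemma norm_gradient_mul_one_add_norm_sq_rpow [CompleteSpace E] (a p : ℝ) (x : E) :
    ‖gradient (fun y : E => a * (1 + ‖y‖ ^ 2) ^ p) x‖ =
      2 * |a| * |p| * (1 + ‖x‖ ^ 2) ^ (p - 1) * ‖x‖ := by
  rw [(hasGradientAt_mul_one_add_norm_sq_rpow a p x).gradient, norm_smul, Real.norm_eq_abs,
    abs_mul, abs_mul, abs_mul, abs_two,
    abs_of_pos (by positivity : (0:ℝ) < (1 + ‖x‖ ^ 2) ^ (p - 1))]

lemma norm_gradient_mul_one_add_norm_sq_rpow_neg_le [CompleteSpace E] (a : ℝ) {s t : ℝ}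
    (hs : 0 ≤ s) (hst : s ≤ t) (x : E) :
    s * ‖gradient (fun y : E => a * (1 + ‖y‖ ^ 2) ^ (-t)) x‖ ≤
      t * ‖gradient (fun y : E => a * (1 + ‖y‖ ^ 2) ^ (-s)) x‖ := by
  have ht : 0 ≤ t := hs.trans hst
  have hdecay : (1 + ‖x‖ ^ 2) ^ (-t - 1) ≤ (1 + ‖x‖ ^ 2) ^ (-s - 1) :=
    Real.rpow_le_rpow_of_exponent_le (by nlinarith [norm_nonneg x]) (by linarith)
  rw [norm_gradient_mul_one_add_norm_sq_rpow, norm_gradient_mul_one_add_norm_sq_rpow,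
    abs_neg, abs_neg, abs_of_nonneg hs, abs_of_nonneg ht]
  have hst0 : 0 ≤ 2 * |a| * s * t * ‖x‖ := by positivity
  calc s * (2 * |a| * t * (1 + ‖x‖ ^ 2) ^ (-t - 1) * ‖x‖)
      = 2 * |a| * s * t * ‖x‖ * (1 + ‖x‖ ^ 2) ^ (-t - 1) := by ring
    _ ≤ 2 * |a| * s * t * ‖x‖ * (1 + ‖x‖ ^ 2) ^ (-s - 1) :=
        mul_le_mul_of_nonneg_left hdecay hst0
    _ = t * (2 * |a| * s * (1 + ‖x‖ ^ 2) ^ (-s - 1) * ‖x‖) := by ring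

lemma integrable_sq_norm_gradient_mul_one_add_norm_sq_rpow [FiniteDimensional ℝ E]
    [MeasurableSpace E] [BorelSpace E] (μ : Measure E) [μ.IsAddHaarMeasure] (a : ℝ) {p : ℝ}
    (hp : (finrank ℝ E : ℝ) < 2 - 4 * p) :
    Integrable (fun x => ‖gradient (fun y : E => a * (1 + ‖y‖ ^ 2) ^ p) x‖ ^ 2) μ := by
  simp_rw [norm_gradient_mul_one_add_norm_sq_rpow]
  refine ((integrable_rpow_neg_one_add_norm_sq (μ := μ) hp).const_mul
    ((2 * |a| * |p|) ^ 2)).mono' (Measurable.aestronglyMeasurable (by fun_prop))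
    (Filter.Eventually.of_forall fun x => ?_)
  have hpos : (0:ℝ) < 1 + ‖x‖ ^ 2 := by positivity
  -- `‖x‖² ≤ 1 + ‖x‖²` trades the factor `‖x‖²` for one power of `1 + ‖x‖²`
  have hsplit :
      (1 + ‖x‖ ^ 2) ^ (-(2 - 4 * p) / 2) = ((1 + ‖x‖ ^ 2) ^ (p - 1)) ^ 2 * (1 + ‖x‖ ^ 2) := by
    rw [← Real.rpow_natCast ((1 + ‖x‖ ^ 2) ^ (p - 1)) 2, ← Real.rpow_mul hpos.le,
      ← Real.rpow_add_one hpos.ne']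
    ring_nf
  rw [Real.norm_of_nonneg (by positivity), hsplit]
  have hq : 0 ≤ (2 * |a| * |p|) ^ 2 * ((1 + ‖x‖ ^ 2) ^ (p - 1)) ^ 2 := by positivity
  calc (2 * |a| * |p| * (1 + ‖x‖ ^ 2) ^ (p - 1) * ‖x‖) ^ 2
      = (2 * |a| * |p|) ^ 2 * ((1 + ‖x‖ ^ 2) ^ (p - 1)) ^ 2 * ‖x‖ ^ 2 := by ring
    _ ≤ (2 * |a| * |p|) ^ 2 * ((1 + ‖x‖ ^ 2) ^ (p - 1)) ^ 2 * (1 + ‖x‖ ^ 2) :=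
        mul_le_mul_of_nonneg_left (by linarith) hq
    _ = _ := by ring

end OneAddNormSqRpow

section Instanton

variable {N : ℕ}

lemma instantonPert_eq (σ : ℝ) :
    instantonPert N σ = fun x => ((N:ℝ) * ((N:ℝ) - 2)) ^ (((N:ℝ) - 2) / 4) *
      (1 + ‖x‖ ^ 2) ^ (-(((N:ℝ) - 2 + σ) / 2)) := by
  funext x
  rw [instantonPert, Real.rpow_neg (by positivity), div_eq_mul_inv]

lemma norm_gradient_instantonPert_le (hN : 2 < N) {σ : ℝ} (hσ : 0 ≤ σ)
    (x : EuclideanSpace ℝ (Fin N)) :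
    ((N:ℝ) - 2) * ‖gradient (instantonPert N σ) x‖ ≤
      ((N:ℝ) - 2 + σ) * ‖gradient (instantonPert N 0) x‖ := by
  have hN' : (2:ℝ) < N := by exact_mod_cast hN
  have h := norm_gradient_mul_one_add_norm_sq_rpow_neg_le
    (((N:ℝ) * ((N:ℝ) - 2)) ^ (((N:ℝ) - 2) / 4)) (s := ((N:ℝ) - 2 + 0) / 2)
    (t := ((N:ℝ) - 2 + σ) / 2) (by linarith) (by linarith) x
  rw [instantonPert_eq, instantonPert_eq]
  linarith

lemma integrable_sq_norm_gradient_instantonPert {σ : ℝ} (h : 2 < N + 2 * σ) :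
    Integrable (fun x => ‖gradient (instantonPert N σ) x‖ ^ 2) := by
  rw [instantonPert_eq]
  exact integrable_sq_norm_gradient_mul_one_add_norm_sq_rpow _ _
    (by rw [finrank_euclideanSpace_fin]; linarith)

lemma integral_sq_norm_gradient_instantonPert_le (hN : 2 < N) {σ : ℝ} (hσ : 0 ≤ σ) :
    ∫ x, ‖gradient (instantonPert N σ) x‖ ^ 2 ≤
      (((N:ℝ) - 2 + σ) / ((N:ℝ) - 2)) ^ 2 *
        ∫ x, ‖gradient (instantonPert N 0) x‖ ^ 2 := by
  have hN' : (0:ℝ) < (N:ℝ) - 2 := by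
    have : (2:ℝ) < N := by exact_mod_cast hN
    linarith
  rw [← integral_const_mul]
  refine integral_mono_of_nonneg (Filter.Eventually.of_forall fun x => by positivity)
    ((integrable_sq_norm_gradient_instantonPert (by linarith)).const_mul _)
    (Filter.Eventually.of_forall fun x => ?_)
  dsimp only
  rw [div_pow, div_mul_eq_mul_div, le_div_iff₀ (by positivity), ← mul_pow, ← mul_pow,
    mul_comm]
  exact pow_le_pow_left₀ (by positivity) (norm_gradient_instantonPert_le hN hσ x) 2

end Instanton

/-- for `N = 4`, `‖∇U^σ‖₂² ≤ ‖∇U‖₂² + Cσ` uniformly in `σ ∈ (0,1)`. -/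
theorem stmt_8 (N : ℕ) (hN : N = 4) :
    ∃ C : ℝ, 0 < C ∧ ∀ σ : ℝ, σ ∈ Set.Ioo (0:ℝ) 1 →
      (∫ x : EuclideanSpace ℝ (Fin N), ‖gradient (instantonPert N σ) x‖ ^ (2:ℕ)) ≤
        (∫ x : EuclideanSpace ℝ (Fin N), ‖gradient (instantonPert N 0) x‖ ^ (2:ℕ)) +
          C * σ := by
  subst hN
  set I₀ := ∫ x : EuclideanSpace ℝ (Fin 4), ‖gradient (instantonPert 4 0) x‖ ^ 2
  have hI₀ : 0 ≤ I₀ := integral_nonneg fun x => by positivity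
  refine ⟨2 * I₀ + 1, by linarith, fun σ ⟨hσ₀, hσ₁⟩ => ?_⟩
  have hbound := integral_sq_norm_gradient_instantonPert_le (N := 4) (by norm_num) hσ₀.le
  have hfactor : ((((4:ℕ):ℝ) - 2 + σ) / (((4:ℕ):ℝ) - 2)) ^ 2 ≤ 1 + 2 * σ := by
    rw [show ((4:ℕ):ℝ) - 2 = 2 by norm_num]
    nlinarith
  nlinarith [mul_le_mul_of_nonneg_right hfactor hI₀]
end

section
/- Let N = 4, α ∈ (0,N), p = (N+α)/(N−2), and U^σ(x) = [N(N−2)]^{(N−2)/4}/(1+|x|²)^{(N−2+σ)/2} for σ ∈ (0,1). Then B(U) − B(U^σ) ≤ Cσ for a constant C independent of σ, where B(v) = ∫∫ |v(x)|^p |v(y)|^p / |x−y|^{N−α} dx dy and U = U^0. -/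
open MeasureTheory

/-- The nonlocal energy `B(v) = ∫∫ |v(x)|^p |v(y)|^p / |x−y|^{N−α}`. -/
noncomputable def nonlocalB (N : ℕ) (α p : ℝ) (u : EuclideanSpace ℝ (Fin N) → ℝ) : ℝ :=
  ∫ x : EuclideanSpace ℝ (Fin N), ∫ y : EuclideanSpace ℝ (Fin N),
    |u x| ^ p * |u y| ^ p * ‖x - y‖ ^ (α - (N:ℝ))


/-! Write `|U^σ|^p = c (1 + |x|²)^{-(p + s)}` with `s = σp/2`. Then `B(U) - B(U^σ)` is `c` times
the integral of `K_p (1 - t^{-s})`, where `t = (1 + |x|²)(1 + |y|²)` and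
`K_q(x, y) = (1 + |x|²)^{-q} (1 + |y|²)^{-q} |x - y|^{α - N}`. Since
`1 - t^{-s} ≤ s log t ≤ (s/ε) t^ε`, this is at most `(s/ε) c ∫ K_{p-ε}`, and for `ε = α/4` the
exponent `p - ε = 2 + α/4` exceeds `N/2`, so `K_{p-ε}` is integrable: the Riesz kernel is locally
integrable and bounded away from the diagonal. -/

open Real Set Metric Module

theorem one_sub_rpow_neg_le {t s ε : ℝ} (ht : 0 < t) (hs : 0 ≤ s) (hε : 0 < ε) :
    1 - t ^ (-s) ≤ s / ε * t ^ ε :=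
  calc 1 - t ^ (-s) = 1 - (t ^ s)⁻¹ := by rw [rpow_neg ht.le]
    _ ≤ log (t ^ s) := one_sub_inv_le_log_of_pos (rpow_pos_of_pos ht s)
    _ = s * log t := log_rpow ht s
    _ ≤ s * (t ^ ε / ε) := mul_le_mul_of_nonneg_left (log_le_rpow_div ht.le hε) hs
    _ = s / ε * t ^ ε := by ring

section WeightedRieszKernel

variable {E : Type*} [NormedAddCommGroup E] [NormedSpace ℝ E]

variable (E) in
noncomputable def weightedRieszKernel (α q : ℝ) (z : E × E) : ℝ :=
  (1 + ‖z.1‖ ^ 2) ^ (-q) * (1 + ‖z.2‖ ^ 2) ^ (-q) * ‖z.1 - z.2‖ ^ (α - finrank ℝ E)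

theorem weightedRieszKernel_nonneg (α q : ℝ) (z : E × E) : 0 ≤ weightedRieszKernel E α q z := by
  unfold weightedRieszKernel; positivity

theorem weightedRieszKernel_add (α q r : ℝ) (z : E × E) :
    weightedRieszKernel E α (q + r) z =
      weightedRieszKernel E α q z * ((1 + ‖z.1‖ ^ 2) * (1 + ‖z.2‖ ^ 2)) ^ (-r) := by
  have hA : 0 < 1 + ‖z.1‖ ^ 2 := by positivity
  have hB : 0 < 1 + ‖z.2‖ ^ 2 := by positivity
  simp only [weightedRieszKernel, neg_add, rpow_add hA, rpow_add hB, mul_rpow hA.le hB.le]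
  ring

theorem weightedRieszKernel_sub_le (α q : ℝ) {s ε : ℝ} (hs : 0 ≤ s) (hε : 0 < ε) (z : E × E) :
    weightedRieszKernel E α q z - weightedRieszKernel E α (q + s) z ≤
      s / ε * weightedRieszKernel E α (q - ε) z := by
  have ht : 0 < (1 + ‖z.1‖ ^ 2) * (1 + ‖z.2‖ ^ 2) := by positivity
  rw [weightedRieszKernel_add α q s, sub_eq_add_neg q ε, weightedRieszKernel_add α q (-ε), neg_neg]
  calc _ = weightedRieszKernel E α q z * (1 - ((1 + ‖z.1‖ ^ 2) * (1 + ‖z.2‖ ^ 2)) ^ (-s)) := by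
        ring
    _ ≤ weightedRieszKernel E α q z * (s / ε * ((1 + ‖z.1‖ ^ 2) * (1 + ‖z.2‖ ^ 2)) ^ ε) :=
        mul_le_mul_of_nonneg_left (one_sub_rpow_neg_le ht hs hε) (weightedRieszKernel_nonneg α q z)
    _ = _ := by ring

variable [FiniteDimensional ℝ E] [MeasurableSpace E] [BorelSpace E] {μ : Measure E}
  [μ.IsAddHaarMeasure]

theorem integrable_indicator_ball_norm_rpow [Nontrivial E] {α : ℝ} (hα : 0 < α) :
    Integrable ((ball (0 : E) 1).indicator fun z => ‖z‖ ^ (α - finrank ℝ E)) μ := by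
  refine (integrable_indicator_iff measurableSet_ball).2 <|
    integrableOn_ball_of_norm_le_rpow (C := 1) (α := finrank ℝ E - α) Module.finrank_pos
      (by linarith) (Filter.Eventually.of_forall fun z => ?_)
      (by fun_prop : Measurable fun z : E => ‖z‖ ^ (α - finrank ℝ E)).aestronglyMeasurable
  rw [norm_of_nonneg (by positivity), one_mul, neg_sub]

/-- The integrand is dominated by `|u x| |u y| + M |u y| k (x - y)`, with `k` the Riesz kernel
truncated to the unit ball: an integrable product plus an integrable convolution integrand. -/
theorem integrable_mul_mul_norm_sub_rpow [Nontrivial E] {u : E → ℝ} (hu : Integrable u μ)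
    {M : ℝ} (hM : ∀ x, ‖u x‖ ≤ M) {α : ℝ} (hα0 : 0 < α) (hαd : α ≤ finrank ℝ E) :
    Integrable (fun z : E × E => u z.1 * u z.2 * ‖z.1 - z.2‖ ^ (α - finrank ℝ E))
      (μ.prod μ) := by
  set k := (ball (0 : E) 1).indicator fun z => ‖z‖ ^ (α - finrank ℝ E)
  have hM0 : 0 ≤ M := (norm_nonneg _).trans (hM 0)
  have hprod : Integrable (fun z : E × E => u z.1 * u z.2) (μ.prod μ) := hu.mul_prod hu
  have hconv : Integrable (fun z : E × E => u z.2 * k (z.1 - z.2)) (μ.prod μ) :=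
    hu.convolution_integrand (ContinuousLinearMap.mul ℝ ℝ) (integrable_indicator_ball_norm_rpow hα0)
  refine (hprod.norm.add (hconv.norm.const_mul M)).mono'
    (hprod.aestronglyMeasurable.mul (by fun_prop : Measurable fun z : E × E =>
      ‖z.1 - z.2‖ ^ (α - finrank ℝ E)).aestronglyMeasurable)
    (Filter.Eventually.of_forall fun z => ?_)
  have hK : 0 ≤ ‖z.1 - z.2‖ ^ (α - finrank ℝ E) := by positivity
  simp only [Pi.add_apply, norm_mul, norm_of_nonneg hK]
  have hu12 := mul_nonneg (norm_nonneg (u z.1)) (norm_nonneg (u z.2))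
  rcases lt_or_ge ‖z.1 - z.2‖ 1 with hnear | hfar
  · have hk : k (z.1 - z.2) = ‖z.1 - z.2‖ ^ (α - finrank ℝ E) :=
      indicator_of_mem (mem_ball_zero_iff.2 hnear) _
    rw [hk, norm_of_nonneg hK]
    have := mul_le_mul_of_nonneg_right (hM z.1) (norm_nonneg (u z.2))
    nlinarith [mul_nonneg (mul_nonneg hM0 (norm_nonneg (u z.2))) hK]
  · have hK1 : ‖z.1 - z.2‖ ^ (α - finrank ℝ E) ≤ 1 :=
      rpow_le_one_of_one_le_of_nonpos hfar (by linarith)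
    nlinarith [mul_nonneg hM0 (mul_nonneg (norm_nonneg (u z.2)) (norm_nonneg (k (z.1 - z.2))))]

theorem integrable_weightedRieszKernel [Nontrivial E] {α q : ℝ} (hα0 : 0 < α)
    (hαd : α ≤ finrank ℝ E) (hq : finrank ℝ E < 2 * q) :
    Integrable (weightedRieszKernel E α q) (μ.prod μ) := by
  have hu : Integrable (fun x : E => (1 + ‖x‖ ^ 2) ^ (-q)) μ := by
    convert integrable_rpow_neg_one_add_norm_sq (μ := μ) hq using 3; ring
  refine integrable_mul_mul_norm_sub_rpow hu (M := 1) (fun x => ?_) hα0 hαd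
  rw [norm_of_nonneg (by positivity)]
  exact rpow_le_one_of_one_le_of_nonpos (by nlinarith [sq_nonneg ‖x‖]) (by linarith)

theorem integral_weightedRieszKernel_sub_le [Nontrivial E] {α q s ε : ℝ} (hα0 : 0 < α)
    (hαd : α ≤ finrank ℝ E) (hs : 0 ≤ s) (hε : 0 < ε) (hq : finrank ℝ E < 2 * (q - ε)) :
    ∫ z, weightedRieszKernel E α q z ∂μ.prod μ - ∫ z, weightedRieszKernel E α (q + s) z ∂μ.prod μ
      ≤ s / ε * ∫ z, weightedRieszKernel E α (q - ε) z ∂μ.prod μ := by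
  have hK : ∀ r, q - ε ≤ r → Integrable (weightedRieszKernel E α r) (μ.prod μ) :=
    fun r hr => integrable_weightedRieszKernel hα0 hαd (by linarith)
  rw [← integral_sub (hK q (by linarith)) (hK (q + s) (by linarith)), ← integral_const_mul]
  exact integral_mono ((hK q (by linarith)).sub (hK (q + s) (by linarith)))
    ((hK (q - ε) le_rfl).const_mul _) (weightedRieszKernel_sub_le α q hs hε)

end WeightedRieszKernel

local notation "ℝ⁴" => EuclideanSpace ℝ (Fin 4)

noncomputable def instantonConst (N : ℕ) : ℝ := ((N:ℝ) * ((N:ℝ) - 2)) ^ (((N:ℝ) - 2) / 4)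

theorem abs_instantonPert_rpow (N : ℕ) (σ p : ℝ) (x : EuclideanSpace ℝ (Fin N)) :
    |instantonPert N σ x| ^ p = |instantonConst N| ^ p *
      (1 + ‖x‖ ^ 2) ^ (-(((N:ℝ) - 2 + σ) / 2 * p)) := by
  have hA : 0 < 1 + ‖x‖ ^ 2 := by positivity
  rw [instantonPert, ← instantonConst, abs_div, abs_of_pos (rpow_pos_of_pos hA _),
    div_rpow (abs_nonneg _) (rpow_nonneg hA.le _), ← rpow_mul hA.le, rpow_neg hA.le, div_eq_mul_inv]

theorem nonlocalB_instantonPert (N : ℕ) (α p σ : ℝ)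
    (hK : Integrable (weightedRieszKernel (EuclideanSpace ℝ (Fin N)) α (((N:ℝ) - 2 + σ) / 2 * p))
      (volume.prod volume)) :
    nonlocalB N α p (instantonPert N σ) = (|instantonConst N| ^ p) ^ 2 *
      ∫ z, weightedRieszKernel (EuclideanSpace ℝ (Fin N)) α (((N:ℝ) - 2 + σ) / 2 * p) z
        ∂(volume.prod volume) := by
  have hpt : ∀ x y : EuclideanSpace ℝ (Fin N),
      |instantonPert N σ x| ^ p * |instantonPert N σ y| ^ p * ‖x - y‖ ^ (α - (N:ℝ)) =
        (|instantonConst N| ^ p) ^ 2 *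
          weightedRieszKernel _ α (((N:ℝ) - 2 + σ) / 2 * p) (x, y) := by
    intro x y
    rw [abs_instantonPert_rpow, abs_instantonPert_rpow, weightedRieszKernel,
      finrank_euclideanSpace_fin]
    ring
  simp only [nonlocalB, hpt]
  rw [integral_integral (hK.const_mul _), integral_const_mul]

/-- for `N = 4`, `p = (N+α)/(N−2)`,
`B(U) − B(U^σ) ≤ Cσ` uniformly in `σ ∈ (0,1)`. -/
theorem stmt_9 (N : ℕ) (hN : N = 4) (α : ℝ) (hα : α ∈ Set.Ioo (0:ℝ) N)
    (p : ℝ) (hp : p = ((N:ℝ) + α) / ((N:ℝ) - 2)) :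
    ∃ C : ℝ, 0 < C ∧ ∀ σ : ℝ, σ ∈ Set.Ioo (0:ℝ) 1 →
      nonlocalB N α p (instantonPert N 0) - nonlocalB N α p (instantonPert N σ) ≤
        C * σ := by
  subst hN
  obtain ⟨hα0, hα4⟩ := hα
  push_cast at hα4
  have hdim : (finrank ℝ ℝ⁴ : ℝ) = 4 := by simp
  have hp2 : p = 2 + α / 2 := by rw [hp]; push_cast; ring
  set c := (|instantonConst 4| ^ p) ^ 2
  have hB : ∀ σ : ℝ, 0 ≤ σ → nonlocalB 4 α p (instantonPert 4 σ) =
      c * ∫ z, weightedRieszKernel ℝ⁴ α (p + σ * p / 2) z ∂(volume.prod volume) := by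
    intro σ hσ
    have hq : (((4:ℕ):ℝ) - 2 + σ) / 2 * p = p + σ * p / 2 := by push_cast; ring
    rw [nonlocalB_instantonPert _ _ _ _ (hq ▸ integrable_weightedRieszKernel hα0
      (by rw [hdim]; linarith) (by rw [hdim]; nlinarith)), hq]
  set D := ∫ z, weightedRieszKernel ℝ⁴ α (p - α / 4) z ∂(volume.prod volume)
  have hD : 0 ≤ D := integral_nonneg (weightedRieszKernel_nonneg α _)
  have hp0 : 0 < p := by linarith
  refine ⟨c * (p / 2) / (α / 4) * D + 1, by positivity, fun σ ⟨hσ0, _⟩ => ?_⟩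
  have hdiff := integral_weightedRieszKernel_sub_le (μ := volume) (q := p) (s := σ * p / 2)
    hα0 (by rw [hdim]; linarith) (by positivity) (by positivity : 0 < α / 4)
    (by rw [hdim]; linarith)
  rw [hB 0 le_rfl, hB σ hσ0.le, zero_mul, zero_div, add_zero, ← mul_sub]
  calc _ ≤ c * (σ * p / 2 / (α / 4) * D) := mul_le_mul_of_nonneg_left hdiff (by positivity)
    _ = c * (p / 2) / (α / 4) * D * σ := by ring
    _ ≤ _ := by linarith
end
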